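/- A De Morgan function lies in (i) BiLat if and only if it is positive and persistent; (ii) DLat if and only if it is positive, persistent, and preserves B2; (iii) ⟨DLat, n⟩ if and only if it is positive, persistent, and preserves K3; (iv) ⟨DLat, b⟩ if and only if it is positive, persistent, and preserves P3. -/

import Mathlib

set_option autoImplicit false

/-- The four truth values of the Belnap–Dunn logic. -/
inductive DM4 : Type
  | t
  | f
  | n
  | b
deriving DecidableEq

namespace DM4

/-- De Morgan negation. -/
def neg : DM4 → DM4
  | t => f
  | f => t
  | n => n
  | b => b

/-- Conflation. -/
def conf : DM4 → DM4
  | t => t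
  | f => f
  | n => b
  | b => n

/-- Meet in the truth order. -/
def meet : DM4 → DM4 → DM4
  | f, _ => f
  | _, f => f
  | t, y => y
  | x, t => x
  | n, n => n
  | b, b => b
  | n, b => f
  | b, n => f

/-- Join in the truth order. -/
def join : DM4 → DM4 → DM4
  | t, _ => t
  | _, t => t
  | f, y => y
  | x, f => x
  | n, n => n
  | b, b => b
  | n, b => t
  | b, n => t

/-- Meet in the information order (⊗). -/
def imeet : DM4 → DM4 → DM4
  | n, _ => n
  | _, n => n
  | b, y => y
  | x, b => x
  | t, t => t
  | f, f => f
  | t, f => n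
  | f, t => n

/-- Join in the information order (⊕). -/
def ijoin : DM4 → DM4 → DM4
  | b, _ => b
  | _, b => b
  | n, y => y
  | x, n => x
  | t, t => t
  | f, f => f
  | t, f => b
  | f, t => b

/-- The truth order: least element `f`, greatest element `t`, with `n`, `b` incomparable. -/
def tle (x y : DM4) : Prop := x = y ∨ x = f ∨ y = t

/-- The information order: least element `n`, greatest element `b`, with `t`, `f` incomparable. -/
def ile (x y : DM4) : Prop := x = y ∨ x = n ∨ y = b

/-- □: maps t to t and everything else to f. -/
def box : DM4 → DM4
  | t => t
  | _ => f

/-- ◇: maps f to f and everything else to t. -/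
def diamond : DM4 → DM4
  | f => f
  | _ => t

/-- Δ: maps t, b to t and n, f to f. -/
def delta : DM4 → DM4
  | t => t
  | b => t
  | _ => f

/-- ∇: maps t, n to t and b, f to f. -/
def nabla : DM4 → DM4
  | t => t
  | n => t
  | _ => f

/-- id_{b↦n}: maps b to n and fixes t, f, n. -/
def idbn : DM4 → DM4
  | b => n
  | x => x

/-- id_{n↦b}: maps n to b and fixes t, f, b. -/
def idnb : DM4 → DM4
  | n => b
  | x => x

/-- id_{n↦t}: maps n to t and fixes t, f, b. -/
def idnt : DM4 → DM4
  | n => t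
  | x => x

/-- id_{b↦t}: maps b to t and fixes t, f, n. -/
def idbt : DM4 → DM4
  | b => t
  | x => x

/-- t_{n↦n}: maps n to n and everything else to t. -/
def tnn : DM4 → DM4
  | n => n
  | _ => t

/-- t_{b↦b}: maps b to b and everything else to t. -/
def tbb : DM4 → DM4
  | b => b
  | _ => t

/-- The binary function pbp²₁. -/
def pbp1 : DM4 → DM4 → DM4
  | t, t => t | t, f => f | t, n => f | t, b => b
  | f, t => t | f, f => f | f, n => f | f, b => b
  | n, t => t | n, f => f | n, n => n | n, b => b
  | b, t => b | b, f => f | b, n => f | b, b => b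

/-- The binary function pbp²₂. -/
def pbp2 : DM4 → DM4 → DM4
  | t, t => t | t, f => f | t, n => n | t, b => f
  | f, t => t | f, f => f | f, n => n | f, b => f
  | n, t => n | n, f => f | n, n => n | n, b => f
  | b, t => t | b, f => f | b, n => n | b, b => b

/-- The binary function mnh²₁. -/
def mnh1 : DM4 → DM4 → DM4
  | t, t => f | t, f => f | t, n => n | t, b => b
  | f, t => f | f, f => f | f, n => n | f, b => b
  | n, t => f | n, f => f | n, n => n | n, b => f
  | b, t => f | b, f => f | b, n => n | b, b => b

/-- The binary function mnh²₂. -/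
def mnh2 : DM4 → DM4 → DM4
  | t, t => f | t, f => f | t, n => n | t, b => b
  | f, t => f | f, f => f | f, n => n | f, b => b
  | n, t => f | n, f => f | n, n => n | n, b => b
  | b, t => f | b, f => f | b, n => f | b, b => b

/-- The binary function mhnp². -/
def mhnp2 : DM4 → DM4 → DM4
  | t, _ => t
  | f, _ => t
  | n, b => f
  | n, _ => n
  | b, n => f
  | b, _ => b

/-- The binary function mnp²₁. -/
def mnp1 : DM4 → DM4 → DM4
  | t, b => b
  | t, _ => t
  | f, b => b
  | f, _ => t
  | n, b => f
  | n, _ => n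
  | b, n => f
  | b, _ => b

/-- The binary function mnp²₂. -/
def mnp2 : DM4 → DM4 → DM4
  | t, _ => t
  | f, _ => t
  | n, _ => n
  | b, n => f
  | b, _ => b

/-- The binary function mnp²₃. -/
def mnp3 : DM4 → DM4 → DM4
  | t, n => n
  | t, _ => t
  | f, n => n
  | f, _ => t
  | n, b => f
  | n, _ => n
  | b, n => f
  | b, _ => b

/-- The binary function mnp²₄. -/
def mnp4 : DM4 → DM4 → DM4
  | t, _ => t
  | f, _ => t
  | n, b => f
  | n, _ => n
  | b, _ => b

/-- The ternary function mhnp³. -/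
def mhnp3 : DM4 → DM4 → DM4 → DM4
  | _, t, _ => f
  | _, f, _ => f
  | t, n, _ => n
  | f, n, _ => f
  | b, n, _ => f
  | n, n, b => f
  | n, n, _ => n
  | t, b, _ => b
  | f, b, _ => f
  | n, b, _ => f
  | b, b, n => f
  | b, b, _ => b

/-- The set of designated values. -/
def Des : Set DM4 := {t, b}

/-- Designatedness as a Boolean predicate. -/
def des : DM4 → Bool
  | t => true
  | b => true
  | _ => false

/-- The protoimplication →_{t-max}. -/
def tmax (x y : DM4) : DM4 :=
  match des x, des y with
  | true, false => n
  | _, _ => t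

/-- The protoimplication →_{i-max}. -/
def imax (x y : DM4) : DM4 :=
  match des x, des y with
  | true, false => f
  | _, _ => b

/-- The protoimplication ↔_{t-min}. -/
def tmin (x y : DM4) : DM4 := if x = y then b else f

/-- The protoimplication ↔_{i-min}. -/
def imin (x y : DM4) : DM4 := if x = y then t else n

/-- A binary operation is a protoimplication if it satisfies Reflexivity and Modus Ponens
with respect to the designated set {t, b}. -/
def IsProtoimplication (r : DM4 → DM4 → DM4) : Prop :=
  (∀ a : DM4, r a a ∈ Des) ∧ ∀ a c : DM4, a ∈ Des → r a c ∈ Des → c ∈ Des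

/-- `DMFun k` is the type of De Morgan functions of arity `k + 1` (arities are positive). -/
abbrev DMFun (k : ℕ) : Type := (Fin (k + 1) → DM4) → DM4

/-- Membership in the clone generated by the family of operations `S`
(`S k` is the set of generators of arity `k + 1`). -/
inductive InClone (S : ∀ k : ℕ, Set (DMFun k)) : ∀ k : ℕ, DMFun k → Prop
  | base {k : ℕ} {g : DMFun k} : g ∈ S k → InClone S k g
  | proj {k : ℕ} (i : Fin (k + 1)) : InClone S k (fun x => x i)
  | comp {k m : ℕ} {g : DMFun m} {h : Fin (m + 1) → DMFun k} :
      InClone S m g → (∀ i, InClone S k (h i)) →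
      InClone S k (fun x => g (fun i => h i x))

/-- A family of sets of De Morgan functions is a clone if it contains all projections
and is closed under composition. -/
structure IsClone (C : ∀ k : ℕ, Set (DMFun k)) : Prop where
  proj : ∀ (k : ℕ) (i : Fin (k + 1)), (fun x => x i) ∈ C k
  comp : ∀ (k m : ℕ) (g : DMFun m) (h : Fin (m + 1) → DMFun k),
      g ∈ C m → (∀ i, h i ∈ C k) → (fun x => g (fun i => h i x)) ∈ C k

/-- The generating family consisting of a single unary operation. -/
def op1 (g : DM4 → DM4) : ∀ k : ℕ, Set (DMFun k)
  | 0 => {fun x => g (x 0)}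
  | _ + 1 => ∅

/-- The generating family consisting of a single binary operation. -/
def op2 (g : DM4 → DM4 → DM4) : ∀ k : ℕ, Set (DMFun k)
  | 1 => {fun x => g (x 0) (x 1)}
  | _ => ∅

/-- The generating family consisting of a single ternary operation. -/
def op3 (g : DM4 → DM4 → DM4 → DM4) : ∀ k : ℕ, Set (DMFun k)
  | 2 => {fun x => g (x 0) (x 1) (x 2)}
  | _ => ∅

/-- Union of two families of operations. -/
def funion (S T : ∀ k : ℕ, Set (DMFun k)) : ∀ k : ℕ, Set (DMFun k) := fun k => S k ∪ T k

infixr:65 " ⊹ " => funion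

/-- The generators of DLat: ∧, ∨, t, f (constants as unary constant functions). -/
def DLatGen : ∀ k : ℕ, Set (DMFun k) :=
  op2 meet ⊹ op2 join ⊹ op1 (fun _ => t) ⊹ op1 (fun _ => f)

/-- The generators of DMA: ∧, ∨, t, f, −. -/
def DMAGen : ∀ k : ℕ, Set (DMFun k) := DLatGen ⊹ op1 neg

/-- The generators of BiLat: ∧, ∨, t, f, ⊗, ⊕, n, b. -/
def BiLatGen : ∀ k : ℕ, Set (DMFun k) :=
  DLatGen ⊹ op2 imeet ⊹ op2 ijoin ⊹ op1 (fun _ => n) ⊹ op1 (fun _ => b)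

/-- A De Morgan function is harmonious if it commutes with conflation. -/
def Harmonious {k : ℕ} (g : DMFun k) : Prop :=
  ∀ x : Fin (k + 1) → DM4, g (fun i => conf (x i)) = conf (g x)

/-- A De Morgan function is positive if it is monotone in the componentwise truth order. -/
def Positive {k : ℕ} (g : DMFun k) : Prop :=
  ∀ x y : Fin (k + 1) → DM4, (∀ i, tle (x i) (y i)) → tle (g x) (g y)

/-- A De Morgan function is persistent if it is monotone in the componentwise
information order. -/
def Persistent {k : ℕ} (g : DMFun k) : Prop :=
  ∀ x y : Fin (k + 1) → DM4, (∀ i, ile (x i) (y i)) → ile (g x) (g y)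

/-- A De Morgan function preserves a subset X of DM4 if it maps tuples from X into X. -/
def Preserves {k : ℕ} (g : DMFun k) (X : Set DM4) : Prop :=
  ∀ x : Fin (k + 1) → DM4, (∀ i, x i ∈ X) → g x ∈ X

def B2 : Set DM4 := {t, f}
def K3 : Set DM4 := {t, n, f}
def P3 : Set DM4 := {t, b, f}

/-- A unary operation as a De Morgan function. -/
def toF1 (g : DM4 → DM4) : DMFun 0 := fun x => g (x 0)

/-- A binary operation as a De Morgan function. -/
def toF2 (g : DM4 → DM4 → DM4) : DMFun 1 := fun x => g (x 0) (x 1)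

/-- A ternary operation as a De Morgan function. -/
def toF3 (g : DM4 → DM4 → DM4 → DM4) : DMFun 2 := fun x => g (x 0) (x 1) (x 2)

/-- The clone generated by a family of operations, as a family of sets. -/
def CloneOf (S : ∀ k : ℕ, Set (DMFun k)) : ∀ k : ℕ, Set (DMFun k) :=
  fun k => {g | InClone S k g}

/-- Inclusion of families of operations. -/
def CloneLE (C D : ∀ k : ℕ, Set (DMFun k)) : Prop := ∀ k : ℕ, C k ⊆ D k

/-!
Identify `x : DM4` with the pair `(toldT x, toldF x) : Bool × Bool`. The truth order is then
`≤ × ≥` and the information order is `≤ × ≤`, so for a function monotone in both orders each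
output coordinate is monotone and antitone in the other input coordinate, hence independent of
it: such a `g` is determined by two monotone Boolean functions, its truth part and its falsity
part, both read off from classical inputs. A lattice term built from a disjunctive normal form
of a monotone `h` computes `h` on the truth coordinate and the dual of `h` on the falsity
coordinate. With `N ∈ {n, f}` and `B ∈ {b, t}`, the term `(D₁ ∨ (D₂ ∧ N)) ∧ (D₂ ∨ B)` therefore
recovers `g` as soon as `g` sends classical tuples into `{t, f, N, B}`; the four choices of
`(N, B)` give the four clones. Conversely, all generators are monotone in both orders and
preserve the relevant subsets.
-/

instance : Fintype DM4 where
  elems := {t, f, n, b}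
  complete x := by cases x <;> decide

instance (x y : DM4) : Decidable (tle x y) := inferInstanceAs (Decidable (_ ∨ _))
instance (x y : DM4) : Decidable (ile x y) := inferInstanceAs (Decidable (_ ∨ _))

/-- Belnap's "told true"; with `toldF` it identifies `DM4` with `Bool × Bool` via
`t = (1, 0)`, `f = (0, 1)`, `n = (0, 0)`, `b = (1, 1)`. -/
def toldT : DM4 → Bool
  | t | b => true
  | f | n => false

def toldF : DM4 → Bool
  | f | b => true
  | t | n => false

def mk : Bool → Bool → DM4
  | true, false => t
  | false, true => f
  | false, false => n
  | true, true => b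

def ofBool (a : Bool) : DM4 := mk a (!a)

theorem ofBool_mem_B2 (a : Bool) : ofBool a ∈ B2 := by
  unfold B2; revert a; decide

theorem ext_told {x y : DM4} : toldT x = toldT y → toldF x = toldF y → x = y := by
  revert x y; decide

@[simp] theorem mk_toldT_toldF (x : DM4) : mk (toldT x) (toldF x) = x := by cases x <;> rfl

theorem tle_iff {x y : DM4} : tle x y ↔ toldT x ≤ toldT y ∧ toldF y ≤ toldF x := by
  revert x y; decide

theorem ile_iff {x y : DM4} : ile x y ↔ toldT x ≤ toldT y ∧ toldF x ≤ toldF y := by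
  revert x y; decide

theorem tle_mk_mk {a c a' c' : Bool} : tle (mk a c) (mk a' c') ↔ a ≤ a' ∧ c' ≤ c := by
  revert a c a' c'; decide

theorem ile_mk_mk {a c a' c' : Bool} : ile (mk a c) (mk a' c') ↔ a ≤ a' ∧ c ≤ c' := by
  revert a c a' c'; decide

@[simp] theorem toldT_meet (x y : DM4) : toldT (meet x y) = toldT x ⊓ toldT y := by
  revert x y; decide
@[simp] theorem toldF_meet (x y : DM4) : toldF (meet x y) = toldF x ⊔ toldF y := by
  revert x y; decide
@[simp] theorem toldT_join (x y : DM4) : toldT (join x y) = toldT x ⊔ toldT y := by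
  revert x y; decide
@[simp] theorem toldF_join (x y : DM4) : toldF (join x y) = toldF x ⊓ toldF y := by
  revert x y; decide

section BooleanParts

variable {k : ℕ} {g : DMFun k}

def truthPart (g : DMFun k) (A : Fin (k + 1) → Bool) : Bool := toldT (g (ofBool ∘ A))

def falsityPart (g : DMFun k) (C : Fin (k + 1) → Bool) : Bool := toldF (g (ofBool ∘ Cᶜ))

theorem toldT_eq_truthPart (hpos : Positive g) (hpers : Persistent g) (x : Fin (k + 1) → DM4) :
    toldT (g x) = truthPart g (toldT ∘ x) := by
  set F : (Fin (k + 1) → Bool) → Bool := fun C => toldT (g fun i => mk (toldT (x i)) (C i))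
  have hmono : Monotone F := fun _ _ hC =>
    (ile_iff.mp (hpers _ _ fun i => ile_mk_mk.mpr ⟨le_rfl, hC i⟩)).1
  have hanti : Antitone F := fun _ _ hC =>
    (tle_iff.mp (hpos _ _ fun i => tle_mk_mk.mpr ⟨le_rfl, hC i⟩)).1
  calc toldT (g x) = F (toldF ∘ x) := by simp [F]
    _ = F (toldT ∘ x)ᶜ := constant_of_monotone_antitone hmono hanti _ _
    _ = truthPart g (toldT ∘ x) := rfl

theorem toldF_eq_falsityPart (hpos : Positive g) (hpers : Persistent g) (x : Fin (k + 1) → DM4) :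
    toldF (g x) = falsityPart g (toldF ∘ x) := by
  set F : (Fin (k + 1) → Bool) → Bool := fun A => toldF (g fun i => mk (A i) (toldF (x i)))
  have hmono : Monotone F := fun _ _ hA =>
    (ile_iff.mp (hpers _ _ fun i => ile_mk_mk.mpr ⟨hA i, le_rfl⟩)).2
  have hanti : Antitone F := fun _ _ hA =>
    (tle_iff.mp (hpos _ _ fun i => tle_mk_mk.mpr ⟨hA i, le_rfl⟩)).2
  calc toldF (g x) = F (toldT ∘ x) := by simp [F]
    _ = F (toldF ∘ x)ᶜ := constant_of_monotone_antitone hmono hanti _ _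
    _ = falsityPart g (toldF ∘ x) := by simp [F, falsityPart, ofBool, Function.comp_def]

theorem ofBool_tle_ofBool {a a' : Bool} (h : a ≤ a') : tle (ofBool a) (ofBool a') := by
  revert a a'; decide

theorem truthPart_mono (hpos : Positive g) : Monotone (truthPart g) := fun _ _ hA =>
  (tle_iff.mp (hpos _ _ fun i => ofBool_tle_ofBool (hA i))).1

theorem falsityPart_mono (hpos : Positive g) : Monotone (falsityPart g) := fun _ _ hC =>
  (tle_iff.mp (hpos _ _ fun i => ofBool_tle_ofBool (compl_le_compl hC i))).2

end BooleanParts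

theorem _root_.Monotone.eq_finset_sup_inf_eval {ι : Type*} [Fintype ι] [DecidableEq ι]
    {h : (ι → Bool) → Bool} (hh : Monotone h) :
    h = (Finset.univ.filter fun A => h A).sup fun A =>
      (Finset.univ.filter fun i => A i).inf fun i (C : ι → Bool) => C i := by
  funext C
  rw [Finset.sup_apply]
  refine le_antisymm (Bool.le_iff_imp.mpr fun hC => ?_) (Finset.sup_le fun A hA => ?_)
  · refine top_le_iff.mp (Finset.le_sup_of_le (b := C) (by simpa using hC) ?_)
    rw [Finset.inf_apply]
    exact Finset.le_inf fun i hi => (Finset.mem_filter.mp hi).2.ge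
  · rw [Finset.inf_apply]
    refine Bool.le_iff_imp.mpr fun hinf => ?_
    have hAC : A ≤ C := fun i => Bool.le_iff_imp.mpr fun hi =>
      (Finset.inf_eq_top_iff _ _).mp hinf i (Finset.mem_filter.mpr ⟨Finset.mem_univ i, hi⟩)
    exact top_le_iff.mp ((Finset.mem_filter.mp hA).2.ge.trans (hh hAC))

section CloneBasics

variable {S : ∀ k : ℕ, Set (DMFun k)} {k : ℕ}

theorem InClone.mono {T : ∀ k : ℕ, Set (DMFun k)} (hST : ∀ m, S m ⊆ T m) {g : DMFun k}
    (h : InClone S k g) : InClone T k g := by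
  induction h with
  | base hg => exact .base (hST _ hg)
  | proj i => exact .proj i
  | comp _ _ ihg ihh => exact .comp ihg ihh

theorem InClone.const {c : DM4} (hc : InClone S 0 (toF1 fun _ => c)) :
    InClone S k fun _ => c :=
  .comp (h := fun _ x => x 0) hc fun _ => .proj 0

theorem InClone.binop {op : DM4 → DM4 → DM4} (hop : InClone S 1 (toF2 op)) {F G : DMFun k}
    (hF : InClone S k F) (hG : InClone S k G) : InClone S k fun x => op (F x) (G x) :=
  .comp (h := ![F, G]) hop (Fin.forall_fin_two.mpr ⟨hF, hG⟩)

theorem InClone.mem_of_isClone {C : ∀ k : ℕ, Set (DMFun k)} (hC : IsClone C)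
    (hSC : ∀ m, S m ⊆ C m) {g : DMFun k} (h : InClone S k g) : g ∈ C k := by
  induction h with
  | base hg => exact hSC _ hg
  | proj i => exact hC.proj _ i
  | comp _ _ ihg ihh => exact hC.comp _ _ _ _ ihg ihh

end CloneBasics

theorem meet_mem_DLat : InClone DLatGen 1 (toF2 meet) := .base (Or.inl rfl)
theorem join_mem_DLat : InClone DLatGen 1 (toF2 join) := .base (Or.inr (Or.inl rfl))
theorem t_mem_DLat : InClone DLatGen 0 (toF1 fun _ => t) := .base (Or.inr (Or.inr (Or.inl rfl)))
theorem f_mem_DLat : InClone DLatGen 0 (toF1 fun _ => f) := .base (Or.inr (Or.inr (Or.inr rfl)))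

section Realization

variable {k : ℕ}

/-- `meet` and `join` swap their roles on the falsity coordinate, so a lattice term computes
the dual of `h` there. -/
def Realizes (D : DMFun k) (h : (Fin (k + 1) → Bool) → Bool) : Prop :=
  ∀ x, toldT (D x) = h (toldT ∘ x) ∧ toldF (D x) = (h (toldF ∘ x)ᶜ)ᶜ

def latticeRealizable (k : ℕ) : Set ((Fin (k + 1) → Bool) → Bool) :=
  {h | ∃ D, InClone DLatGen k D ∧ Realizes D h}

theorem eval_mem_latticeRealizable (i : Fin (k + 1)) :
    (fun C => C i) ∈ latticeRealizable k :=
  ⟨fun x => x i, .proj i, fun x => ⟨rfl, by simp⟩⟩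

theorem top_mem_latticeRealizable : ⊤ ∈ latticeRealizable k :=
  ⟨fun _ => t, .const t_mem_DLat, fun _ => ⟨rfl, rfl⟩⟩

theorem bot_mem_latticeRealizable : ⊥ ∈ latticeRealizable k :=
  ⟨fun _ => f, .const f_mem_DLat, fun _ => ⟨rfl, rfl⟩⟩

theorem inf_mem_latticeRealizable {h h' : (Fin (k + 1) → Bool) → Bool}
    (hh : h ∈ latticeRealizable k) (hh' : h' ∈ latticeRealizable k) :
    h ⊓ h' ∈ latticeRealizable k := by
  obtain ⟨D, hD, hrD⟩ := hh
  obtain ⟨D', hD', hrD'⟩ := hh'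
  refine ⟨fun x => meet (D x) (D' x), meet_mem_DLat.binop hD hD', fun x => ?_⟩
  simp [(hrD x).1, (hrD x).2, (hrD' x).1, (hrD' x).2]

theorem sup_mem_latticeRealizable {h h' : (Fin (k + 1) → Bool) → Bool}
    (hh : h ∈ latticeRealizable k) (hh' : h' ∈ latticeRealizable k) :
    h ⊔ h' ∈ latticeRealizable k := by
  obtain ⟨D, hD, hrD⟩ := hh
  obtain ⟨D', hD', hrD'⟩ := hh'
  refine ⟨fun x => join (D x) (D' x), join_mem_DLat.binop hD hD', fun x => ?_⟩
  simp [(hrD x).1, (hrD x).2, (hrD' x).1, (hrD' x).2]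

theorem mem_latticeRealizable_of_monotone {h : (Fin (k + 1) → Bool) → Bool}
    (hh : Monotone h) : h ∈ latticeRealizable k := by
  rw [hh.eq_finset_sup_inf_eval]
  refine Finset.sup_induction bot_mem_latticeRealizable
    (fun _ h₁ _ h₂ => sup_mem_latticeRealizable h₁ h₂) fun _ _ => ?_
  exact Finset.inf_induction top_mem_latticeRealizable
    (fun _ h₁ _ h₂ => inf_mem_latticeRealizable h₁ h₂) fun i _ => eval_mem_latticeRealizable i

end Realization

/-- The falsity coordinate of the normal form in `inClone_of_positive_of_persistent`, evaluated
at the image `y` of a classical tuple. -/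
theorem toldF_eq_normalForm_of_mem : ∀ {y N B : DM4}, (N = n ∨ N = f) → (B = b ∨ B = t) →
    y ∈ ({t, f, N, B} : Set DM4) →
    toldF y = ((toldT y)ᶜ ⊓ (toldF y ⊔ toldF N)) ⊔ (toldF y ⊓ toldF B) := by
  decide

theorem inClone_of_positive_of_persistent {S : ∀ k : ℕ, Set (DMFun k)}
    (hS : ∀ m, DLatGen m ⊆ S m) {N B : DM4} (hN : N = n ∨ N = f) (hB : B = b ∨ B = t)
    (hNS : InClone S 0 (toF1 fun _ => N)) (hBS : InClone S 0 (toF1 fun _ => B))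
    {k : ℕ} {g : DMFun k} (hpos : Positive g) (hpers : Persistent g)
    (hg : ∀ x, (∀ i, x i ∈ B2) → g x ∈ ({t, f, N, B} : Set DM4)) : InClone S k g := by
  obtain ⟨D₁, hD₁, hr₁⟩ := mem_latticeRealizable_of_monotone (truthPart_mono hpos)
  obtain ⟨D₂, hD₂, hr₂⟩ := mem_latticeRealizable_of_monotone (h := fun C => (falsityPart g Cᶜ)ᶜ)
    fun _ _ hC => compl_le_compl (falsityPart_mono hpos (compl_le_compl hC))
  have hform : g = fun x => meet (join (D₁ x) (meet (D₂ x) N)) (join (D₂ x) B) := by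
    funext x
    have hNT : toldT N = false := by rcases hN with rfl | rfl <;> rfl
    have hBT : toldT B = true := by rcases hB with rfl | rfl <;> rfl
    refine ext_told ?_ ?_
    · simp [(hr₁ x).1, hNT, hBT, toldT_eq_truthPart hpos hpers]
    · rw [toldF_eq_falsityPart hpos hpers, toldF_meet, toldF_join, toldF_join, toldF_meet,
        (hr₁ x).2, (hr₂ x).2, compl_compl, compl_compl]
      exact toldF_eq_normalForm_of_mem hN hB (hg _ fun _ => ofBool_mem_B2 _)
  rw [hform]
  have hmeet := meet_mem_DLat.mono hS
  have hjoin := join_mem_DLat.mono hS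
  exact hmeet.binop (hjoin.binop (hD₁.mono hS) (hmeet.binop (hD₂.mono hS) hNS.const))
    (hjoin.binop (hD₂.mono hS) hBS.const)

section Soundness

variable {k : ℕ}

def PreservesRel (R : DM4 → DM4 → Prop) (g : DMFun k) : Prop :=
  ∀ x y, (∀ i, R (x i) (y i)) → R (g x) (g y)

theorem isClone_preservesRel (R : DM4 → DM4 → Prop) :
    IsClone fun k => {g : DMFun k | PreservesRel R g} :=
  ⟨fun _ i _ _ hxy => hxy i, fun _ _ _ _ hg hh _ _ hxy => hg _ _ fun i => hh i _ _ hxy⟩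

theorem isClone_preserves (X : Set DM4) : IsClone fun k => {g : DMFun k | Preserves g X} :=
  ⟨fun _ i _ hx => hx i, fun _ _ _ _ hg hh _ hx => hg _ fun i => hh i _ hx⟩

theorem op1_subset {C : ∀ k : ℕ, Set (DMFun k)} {u : DM4 → DM4} (h : toF1 u ∈ C 0) :
    ∀ m, op1 u m ⊆ C m
  | 0 => Set.singleton_subset_iff.mpr h
  | _ + 1 => Set.empty_subset _

theorem op2_subset {C : ∀ k : ℕ, Set (DMFun k)} {u : DM4 → DM4 → DM4} (h : toF2 u ∈ C 1) :
    ∀ m, op2 u m ⊆ C m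
  | 0 => Set.empty_subset _
  | 1 => Set.singleton_subset_iff.mpr h
  | _ + 2 => Set.empty_subset _

theorem funion_subset {S T C : ∀ k : ℕ, Set (DMFun k)} (hS : ∀ m, S m ⊆ C m)
    (hT : ∀ m, T m ⊆ C m) : ∀ m, (S ⊹ T) m ⊆ C m :=
  fun m => Set.union_subset (hS m) (hT m)

theorem DLatGen_subset {C : ∀ k : ℕ, Set (DMFun k)} (hmeet : toF2 meet ∈ C 1)
    (hjoin : toF2 join ∈ C 1) (ht : toF1 (fun _ => t) ∈ C 0) (hf : toF1 (fun _ => f) ∈ C 0) :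
    ∀ m, DLatGen m ⊆ C m :=
  funion_subset (op2_subset hmeet) <| funion_subset (op2_subset hjoin) <|
    funion_subset (op1_subset ht) (op1_subset hf)

theorem preservesRel_of_inClone_BiLatGen {R : DM4 → DM4 → Prop} (hR : ∀ a, R a a)
    (hmeet : ∀ a a' c c', R a a' → R c c' → R (meet a c) (meet a' c'))
    (hjoin : ∀ a a' c c', R a a' → R c c' → R (join a c) (join a' c'))
    (himeet : ∀ a a' c c', R a a' → R c c' → R (imeet a c) (imeet a' c'))
    (hijoin : ∀ a a' c c', R a a' → R c c' → R (ijoin a c) (ijoin a' c'))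
    {g : DMFun k} (h : InClone BiLatGen k g) : PreservesRel R g := by
  have binop {u : DM4 → DM4 → DM4} (hu : ∀ a a' c c', R a a' → R c c' → R (u a c) (u a' c')) :
      PreservesRel R (toF2 u) := fun _ _ hxy => hu _ _ _ _ (hxy 0) (hxy 1)
  have const (c : DM4) : PreservesRel R (toF1 fun _ => c) := fun _ _ _ => hR c
  exact h.mem_of_isClone (isClone_preservesRel R) <|
    funion_subset (DLatGen_subset (binop hmeet) (binop hjoin) (const t) (const f)) <|
    funion_subset (op2_subset (binop himeet)) <| funion_subset (op2_subset (binop hijoin)) <|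
    funion_subset (op1_subset (const n)) (op1_subset (const b))

theorem preserves_of_inClone {X : Set DM4} {c : DM4}
    (hmeet : ∀ a a', a ∈ X → a' ∈ X → meet a a' ∈ X)
    (hjoin : ∀ a a', a ∈ X → a' ∈ X → join a a' ∈ X) (ht : t ∈ X) (hf : f ∈ X) (hc : c ∈ X)
    {g : DMFun k} (h : InClone (DLatGen ⊹ op1 fun _ => c) k g) : Preserves g X := by
  have binop {u : DM4 → DM4 → DM4} (hu : ∀ a a', a ∈ X → a' ∈ X → u a a' ∈ X) :
      Preserves (toF2 u) X := fun _ hx => hu _ _ (hx 0) (hx 1)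
  have const {c : DM4} (hc : c ∈ X) : Preserves (toF1 fun _ => c) X := fun _ _ => hc
  exact h.mem_of_isClone (isClone_preserves X) <| funion_subset
    (DLatGen_subset (binop hmeet) (binop hjoin) (const ht) (const hf)) (op1_subset (const hc))

theorem positive_of_inClone_BiLatGen {g : DMFun k} (h : InClone BiLatGen k g) : Positive g :=
  preservesRel_of_inClone_BiLatGen (R := tle) (fun _ => Or.inl rfl) (by decide) (by decide)
    (by decide) (by decide) h

theorem persistent_of_inClone_BiLatGen {g : DMFun k} (h : InClone BiLatGen k g) :
    Persistent g :=
  preservesRel_of_inClone_BiLatGen (R := ile) (fun _ => Or.inl rfl) (by decide) (by decide)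
    (by decide) (by decide) h

end Soundness

section Characterization

variable {k : ℕ} {g : DMFun k}

theorem n_mem_BiLatGen : toF1 (fun _ => n) ∈ BiLatGen 0 := Or.inr (Or.inr (Or.inr (Or.inl rfl)))
theorem b_mem_BiLatGen : toF1 (fun _ => b) ∈ BiLatGen 0 := Or.inr (Or.inr (Or.inr (Or.inr rfl)))

theorem DLatGen_subset_BiLatGen : ∀ m, DLatGen m ⊆ BiLatGen m := fun _ => Set.subset_union_left

theorem inClone_BiLatGen_iff : InClone BiLatGen k g ↔ Positive g ∧ Persistent g := by
  refine ⟨fun h => ⟨positive_of_inClone_BiLatGen h, persistent_of_inClone_BiLatGen h⟩,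
    fun ⟨hpos, hpers⟩ => ?_⟩
  exact inClone_of_positive_of_persistent DLatGen_subset_BiLatGen (Or.inl rfl) (Or.inl rfl)
    (.base n_mem_BiLatGen) (.base b_mem_BiLatGen) hpos hpers fun x _ => by cases g x <;> simp

theorem inClone_DLatGen_iff :
    InClone DLatGen k g ↔ Positive g ∧ Persistent g ∧ Preserves g B2 := by
  refine ⟨fun h => ?_, fun ⟨hpos, hpers, hpre⟩ => ?_⟩
  · have hBiLat := h.mono DLatGen_subset_BiLatGen
    refine ⟨positive_of_inClone_BiLatGen hBiLat, persistent_of_inClone_BiLatGen hBiLat, ?_⟩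
    exact preserves_of_inClone (c := t) (by unfold B2; decide) (by unfold B2; decide)
      (Or.inl rfl) (Or.inr rfl) (Or.inl rfl) (h.mono fun _ => Set.subset_union_left)
  · refine inClone_of_positive_of_persistent (fun _ => subset_rfl) (Or.inr rfl) (Or.inr rfl)
      f_mem_DLat t_mem_DLat hpos hpers fun x hx => ?_
    have hB2 : B2 ⊆ {t, f, f, t} := by simp [B2, Set.insert_subset_iff]
    exact hB2 (hpre x hx)

theorem inClone_DLatGen_n_iff :
    InClone (DLatGen ⊹ op1 fun _ => n) k g ↔ Positive g ∧ Persistent g ∧ Preserves g K3 := by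
  refine ⟨fun h => ?_, fun ⟨hpos, hpers, hpre⟩ => ?_⟩
  · have hBiLat := h.mono (funion_subset DLatGen_subset_BiLatGen (op1_subset n_mem_BiLatGen))
    refine ⟨positive_of_inClone_BiLatGen hBiLat, persistent_of_inClone_BiLatGen hBiLat, ?_⟩
    exact preserves_of_inClone (by unfold K3; decide) (by unfold K3; decide)
      (Or.inl rfl) (Or.inr (Or.inr rfl)) (Or.inr (Or.inl rfl)) h
  · refine inClone_of_positive_of_persistent (fun _ => Set.subset_union_left) (Or.inl rfl)
      (Or.inr rfl) (.base (Or.inr rfl)) (t_mem_DLat.mono fun _ => Set.subset_union_left)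
      hpos hpers fun x hx => ?_
    have hB2K3 : B2 ⊆ K3 := by simp [B2, K3, Set.insert_subset_iff]
    have hK3 : K3 ⊆ {t, f, n, t} := by simp [K3, Set.insert_subset_iff]
    exact hK3 (hpre x fun i => hB2K3 (hx i))

theorem inClone_DLatGen_b_iff :
    InClone (DLatGen ⊹ op1 fun _ => b) k g ↔ Positive g ∧ Persistent g ∧ Preserves g P3 := by
  refine ⟨fun h => ?_, fun ⟨hpos, hpers, hpre⟩ => ?_⟩
  · have hBiLat := h.mono (funion_subset DLatGen_subset_BiLatGen (op1_subset b_mem_BiLatGen))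
    refine ⟨positive_of_inClone_BiLatGen hBiLat, persistent_of_inClone_BiLatGen hBiLat, ?_⟩
    exact preserves_of_inClone (by unfold P3; decide) (by unfold P3; decide)
      (Or.inl rfl) (Or.inr (Or.inr rfl)) (Or.inr (Or.inl rfl)) h
  · refine inClone_of_positive_of_persistent (fun _ => Set.subset_union_left) (Or.inr rfl)
      (Or.inl rfl) (f_mem_DLat.mono fun _ => Set.subset_union_left) (.base (Or.inr rfl))
      hpos hpers fun x hx => ?_
    have hB2P3 : B2 ⊆ P3 := by simp [B2, P3, Set.insert_subset_iff]
    have hP3 : P3 ⊆ {t, f, f, b} := by simp [P3, Set.insert_subset_iff]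
    exact hP3 (hpre x fun i => hB2P3 (hx i))

end Characterization

/-- Characterization of the positive persistent clones. -/
theorem positive_persistent_clones (k : ℕ) (g : DMFun k) :
    (InClone BiLatGen k g ↔ Positive g ∧ Persistent g) ∧
    (InClone DLatGen k g ↔ Positive g ∧ Persistent g ∧ Preserves g B2) ∧
    (InClone (DLatGen ⊹ op1 (fun _ => n)) k g ↔
      Positive g ∧ Persistent g ∧ Preserves g K3) ∧
    (InClone (DLatGen ⊹ op1 (fun _ => b)) k g ↔
      Positive g ∧ Persistent g ∧ Preserves g P3) :=
  ⟨inClone_BiLatGen_iff, inClone_DLatGen_iff, inClone_DLatGen_n_iff, inClone_DLatGen_b_iff⟩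

end DM4
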